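/- arXiv:2004.05315 — 3 statements merged into one kernel-verified Lean document; each statement's English description precedes it below -/
import Mathlib

section
/- For any nonempty finite set S of nonincreasingly ordered nonnegative vectors in R^d with common total sum n, the vector a_S defined by a_k := (min_{x∈S} ∑_{i=1}^k x_i) − ∑_{i=1}^{k-1} a_i is nonincreasing, nonnegative, sums to n, and is the greatest lower bound of S under majorization: a_S ≺ x for all x ∈ S, and any c in P_n^{d,↓} with c ≺ x for all x ∈ S satisfies c ≺ a_S. -/
open Finset

/-- Partial sum of the first entries of `x` up to index `i` (inclusive). -/
def partialSum {d : ℕ} (x : Fin d → ℝ) (i : Fin d) : ℝ :=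
  ∑ k ∈ Finset.Iic i, x k

/-- Majorization for nonincreasingly ordered vectors. -/
def Maj {d : ℕ} (x y : Fin d → ℝ) : Prop :=
  (∀ i : Fin d, partialSum x i ≤ partialSum y i) ∧ (∑ k, x k) = (∑ k, y k)

/-- The cumulative minimum `m_k = min_{x ∈ S} ∑_{i ≤ k} x_i`. -/
noncomputable def cumMin {d : ℕ} (S : Finset (Fin d → ℝ)) (hS : S.Nonempty)
    (i : Fin d) : ℝ :=
  S.inf' hS (fun x => partialSum x i)

/-- The candidate greatest lower bound `a_S`, whose `k`-th cumulative sum is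
`min_{x∈S} ∑_{i=1}^k x_i`. -/
noncomputable def glbVec {d : ℕ} (S : Finset (Fin d → ℝ)) (hS : S.Nonempty) :
    Fin d → ℝ :=
  fun i =>
    cumMin S hS i -
      (if h : (i : ℕ) = 0 then 0
       else cumMin S hS ⟨(i : ℕ) - 1, by omega⟩)

lemma partialSum_zero' {d : ℕ} (f : Fin d → ℝ) (i : Fin d) (h : (i:ℕ) = 0) :
    partialSum f i = f i := by
  unfold partialSum
  have : Finset.Iic i = {i} := by
    ext a; simp only [Finset.mem_Iic, Finset.mem_singleton, Fin.le_def, Fin.ext_iff]; omega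
  rw [this, Finset.sum_singleton]

lemma partialSum_succ' {d : ℕ} (f : Fin d → ℝ) (i : Fin d) (h : (i:ℕ) ≠ 0) :
    partialSum f i = partialSum f ⟨(i:ℕ)-1, by omega⟩ + f i := by
  unfold partialSum
  have he : Finset.Iic i = insert i (Finset.Iic (⟨(i:ℕ)-1, by omega⟩ : Fin d)) := by
    ext a; simp only [Finset.mem_Iic, Finset.mem_insert, Fin.le_def, Fin.ext_iff]; omega
  rw [he, Finset.sum_insert (by simp only [Finset.mem_Iic, Fin.le_def]; omega)]
  ring

lemma partialSum_last {d : ℕ} (f : Fin (d+1) → ℝ) :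
    partialSum f (Fin.last d) = ∑ k, f k := by
  unfold partialSum
  congr 1
  ext a; simp [Fin.le_last]

/-- telescoping -/
lemma partialSum_glbVec {d : ℕ} (S : Finset (Fin d → ℝ)) (hS : S.Nonempty) :
    ∀ (v : ℕ) (hv : v < d), partialSum (glbVec S hS) ⟨v, hv⟩ = cumMin S hS ⟨v, hv⟩ := by
  intro v
  induction v with
  | zero =>
    intro hv
    rw [partialSum_zero' _ _ rfl]
    simp [glbVec]
  | succ j ih =>
    intro hv
    rw [partialSum_succ' _ _ (by simp)]
    have h1 : (⟨(j+1) - 1, by omega⟩ : Fin d) = ⟨j, by omega⟩ := rfl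
    rw [h1, ih (by omega)]
    simp only [glbVec]
    rw [dif_neg (by simp)]
    have h2 : (⟨(j+1) - 1, by omega⟩ : Fin d) = ⟨j, by omega⟩ := rfl
    rw [h2]; ring

lemma partialSum_glbVec' {d : ℕ} (S : Finset (Fin d → ℝ)) (hS : S.Nonempty) (i : Fin d) :
    partialSum (glbVec S hS) i = cumMin S hS i := by
  have := partialSum_glbVec S hS i.1 i.2
  simpa using this

/-- for a nonempty finite set `S` of nonincreasing nonnegative
vectors with common sum `n`, the vector `a_S` is nonincreasing, nonnegative,
sums to `n`, is a lower bound of `S` under majorization, and is the greatest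
such lower bound among elements of `P_n^{d,↓}`. -/
theorem glbVec_is_greatest_lower_bound {d : ℕ} (n : ℝ)
    (S : Finset (Fin d → ℝ)) (hS : S.Nonempty)
    (hsort : ∀ x ∈ S, Antitone x) (hpos : ∀ x ∈ S, ∀ i, 0 ≤ x i)
    (hsum : ∀ x ∈ S, (∑ k, x k) = n) :
    Antitone (glbVec S hS) ∧
    (∀ i, 0 ≤ glbVec S hS i) ∧
    (∑ k, glbVec S hS k) = n ∧
    (∀ x ∈ S, Maj (glbVec S hS) x) ∧
    (∀ c : Fin d → ℝ, Antitone c → (∀ i, 0 ≤ c i) → (∑ k, c k) = n →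
      (∀ x ∈ S, Maj c x) → Maj c (glbVec S hS)) := by
  -- partial sums of members are monotone in the index
  have hmonops : ∀ x ∈ S, ∀ i j : Fin d, i ≤ j → partialSum x i ≤ partialSum x j := by
    intro x hx i j hij
    apply Finset.sum_le_sum_of_subset_of_nonneg
    · exact Finset.Iic_subset_Iic.mpr hij
    · intro k _ _; exact hpos x hx k
  -- sum of all entries equals n
  have hsum_glb : (∑ k, glbVec S hS k) = n := by
    rcases Nat.eq_zero_or_pos d with hd | hd
    · haveI : IsEmpty (Fin d) := ⟨fun i => absurd i.2 (by omega)⟩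
      have hcopy : ∃ x, x ∈ S := hS
      obtain ⟨x, hx⟩ := hcopy
      have h1 := hsum x hx
      simp only [Finset.univ_eq_empty, Finset.sum_empty] at h1 ⊢
      exact h1
    · have hall : ∀ f : Fin d → ℝ, (∑ k, f k) = partialSum f ⟨d-1, by omega⟩ := by
        intro f
        unfold partialSum
        congr 1
        ext a
        simp only [Finset.mem_univ, Finset.mem_Iic, Fin.le_def, true_iff]
        omega
      rw [hall, partialSum_glbVec']
      apply le_antisymm
      · have hcopy : ∃ x, x ∈ S := hS
        obtain ⟨x, hx⟩ := hcopy
        calc cumMin S hS ⟨d-1, by omega⟩ ≤ partialSum x ⟨d-1, by omega⟩ :=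
              Finset.inf'_le _ hx
          _ = n := by rw [← hall]; exact hsum x hx
      · apply Finset.le_inf'
        intro x hx
        rw [← hall]; exact (hsum x hx).ge
  -- nonnegativity
  have hnn : ∀ i, 0 ≤ glbVec S hS i := by
    intro i
    simp only [glbVec]
    by_cases h : (i : ℕ) = 0
    · rw [dif_pos h]
      have : (0:ℝ) ≤ cumMin S hS i := by
        apply Finset.le_inf'
        intro x hx
        exact Finset.sum_nonneg fun k _ => hpos x hx k
      linarith
    · rw [dif_neg h]
      have : cumMin S hS ⟨(i:ℕ)-1, by omega⟩ ≤ cumMin S hS i := by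
        apply Finset.le_inf'
        intro x hx
        calc cumMin S hS ⟨(i:ℕ)-1, by omega⟩ ≤ partialSum x ⟨(i:ℕ)-1, by omega⟩ :=
              Finset.inf'_le _ hx
          _ ≤ partialSum x i := hmonops x hx _ _ (by simp only [Fin.le_def]; omega)
      linarith
  -- antitone
  have hanti : Antitone (glbVec S hS) := by
    have key : ∀ (v : ℕ) (hv : v + 1 < d),
        glbVec S hS ⟨v+1, hv⟩ ≤ glbVec S hS ⟨v, by omega⟩ := by
      intro v hv
      obtain ⟨x, hx, hxmin⟩ := Finset.exists_mem_eq_inf' hS (fun x => partialSum x ⟨v, by omega⟩)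
      have hxm : cumMin S hS ⟨v, by omega⟩ = partialSum x ⟨v, by omega⟩ := hxmin
      have hstep : partialSum x ⟨v+1, hv⟩ = partialSum x ⟨v, by omega⟩ + x ⟨v+1, hv⟩ := by
        have := partialSum_succ' x ⟨v+1, hv⟩ (by simp)
        simpa using this
      have hup : cumMin S hS ⟨v+1, hv⟩ ≤ partialSum x ⟨v, by omega⟩ + x ⟨v+1, hv⟩ := by
        rw [← hstep]; exact Finset.inf'_le _ hx
      simp only [glbVec]
      rw [dif_neg (by simp)]
      by_cases h0 : v = 0
      · subst h0
        rw [dif_pos rfl]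
        have hx10 : x ⟨1, hv⟩ ≤ x ⟨0, by omega⟩ := hsort x hx (by simp [Fin.le_def])
        have hps0 : partialSum x ⟨0, by omega⟩ = x ⟨0, by omega⟩ :=
          partialSum_zero' x _ rfl
        have h1 : (⟨(0+1) - 1, by omega⟩ : Fin d) = ⟨0, by omega⟩ := rfl
        rw [h1, hxm]
        linarith
      · rw [dif_neg h0]
        have h1 : (⟨(v+1) - 1, by omega⟩ : Fin d) = ⟨v, by omega⟩ := rfl
        rw [h1, hxm]
        -- need: cumMin ⟨v+1⟩ - psx(v) ≤ psx(v) - cumMin ⟨v-1⟩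
        have hstep2 : partialSum x ⟨v, by omega⟩
            = partialSum x ⟨v-1, by omega⟩ + x ⟨v, by omega⟩ := by
          have := partialSum_succ' x ⟨v, by omega⟩ (by simpa using h0)
          simpa using this
        have hdown : cumMin S hS ⟨v-1, by omega⟩ ≤ partialSum x ⟨v-1, by omega⟩ :=
          Finset.inf'_le _ hx
        have hxmono : x ⟨v+1, hv⟩ ≤ x ⟨v, by omega⟩ := hsort x hx (by simp [Fin.le_def])
        linarith
    -- from adjacent steps to full antitonicity
    intro i j hij
    obtain ⟨vi, hvi⟩ := i
    obtain ⟨vj, hvj⟩ := j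
    simp only [Fin.le_def] at hij
    clear hsum_glb hnn
    induction vj with
    | zero =>
      have : vi = 0 := by omega
      subst this; exact le_refl _
    | succ w ihw =>
      rcases Nat.lt_or_ge vi (w+1) with h | h
      · calc glbVec S hS ⟨w+1, hvj⟩ ≤ glbVec S hS ⟨w, by omega⟩ := key w hvj
          _ ≤ glbVec S hS ⟨vi, hvi⟩ := ihw (by omega) (by omega)
      · have : vi = w + 1 := by omega
        subst this; exact le_refl _
  refine ⟨hanti, hnn, hsum_glb, ?_, ?_⟩
  · intro x hx
    constructor
    · intro i
      rw [partialSum_glbVec']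
      exact Finset.inf'_le _ hx
    · rw [hsum_glb, hsum x hx]
  · intro c hc hcpos hcsum hcmaj
    constructor
    · intro i
      rw [partialSum_glbVec']
      apply Finset.le_inf'
      intro x hx
      exact (hcmaj x hx).1 i
    · rw [hsum_glb, hcsum]
end

section
/- Let b ∈ R^d be nonnegative with ∑ b_k = n, and let F(b) be the result of one step of the flatness process (averaging the first violating block as in the definition). Then the partial sums of F(b) dominate those of b: ∑_{i=1}^k b_i ≤ ∑_{i=1}^k [F(b)]_i for all 1 ≤ k ≤ d, and ∑_k [F(b)]_k = n. -/
open Finset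

/-- one step of the Cicalese–Vaccaro flatness process.
Vectors of length `d` are modelled as functions `b : ℕ → ℝ` (indices `0,…,d-1`).
Suppose `j` is the smallest index in `{1,…,d-1}` with `b j > b (j-1)`, `a` is
the average of the block `b i, …, b j`, and `i` is the greatest index in
`{1,…,j-1}` with `b (i-1) ≥ a` (taking `i = 0` if there is none).  If `F b`
replaces entries `i,…,j` of `b` by `a` and keeps the others, then the partial
sums of `F b` dominate those of `b`, and the total sum is preserved. -/
theorem flattenStep_partialSums_dominate
    (d : ℕ) (n : ℝ) (b : ℕ → ℝ)
    (hb0 : ∀ k < d, 0 ≤ b k)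
    (hbsum : (∑ t ∈ Finset.range d, b t) = n)
    (i j : ℕ) (a : ℝ)
    (hj1 : 1 ≤ j) (hjd : j < d)
    (hjviol : b (j - 1) < b j)
    (hjmin : ∀ j', 1 ≤ j' → j' < j → b j' ≤ b (j' - 1))
    (hij : i ≤ j - 1)
    (ha : a = (∑ k ∈ Finset.Icc i j, b k) / ((j - i + 1 : ℕ) : ℝ))
    (hi : i = 0 ∨ a ≤ b (i - 1))
    (himax : ∀ i', i < i' → i' ≤ j - 1 →
      b (i' - 1) < (∑ k ∈ Finset.Icc i' j, b k) / ((j - i' + 1 : ℕ) : ℝ))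
    (Fb : ℕ → ℝ)
    (hFb : ∀ k, Fb k = if i ≤ k ∧ k ≤ j then a else b k) :
    (∀ k ≤ d, (∑ t ∈ Finset.range k, b t) ≤ ∑ t ∈ Finset.range k, Fb t) ∧
      (∑ t ∈ Finset.range d, Fb t) = n := by
  have hijlt : i < j := by omega
  have hcast : ((j - i + 1 : ℕ) : ℝ) = (j : ℝ) - i + 1 := by
    have := hijlt.le
    push_cast [this]
    ring
  have hsumIcc : ∑ k ∈ Finset.Icc i j, b k = ((j : ℝ) - i + 1) * a := by
    rw [ha, hcast]
    have hpos : (0 : ℝ) < (j : ℝ) - i + 1 := by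
      have : (i : ℝ) ≤ j := by exact_mod_cast hijlt.le
      linarith
    field_simp
  -- key suffix-average lemma
  have key : ∀ m, i ≤ m → m ≤ j →
      ((j : ℝ) - m + 1) * a ≤ ∑ k ∈ Finset.Icc m j, b k := by
    intro m him
    induction m, him using Nat.le_induction with
    | base => intro _; rw [hsumIcc]
    | succ m hm ih =>
      intro hmj
      have hmj' : m ≤ j := by omega
      have ihm := ih hmj'
      have hsplit : ∑ k ∈ Finset.Icc m j, b k
          = b m + ∑ k ∈ Finset.Icc (m + 1) j, b k := by
        rw [← Finset.Ioc_insert_left hmj', Finset.sum_insert Finset.left_notMem_Ioc,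
          Finset.Icc_add_one_left_eq_Ioc]
      have hcastm : ((j - (m + 1) + 1 : ℕ) : ℝ) = (j : ℝ) - m := by
        have h1 : m + 1 ≤ j := hmj
        push_cast [h1]
        ring
      have hc1 : (1 : ℝ) ≤ (j : ℝ) - m := by
        have : (m : ℝ) + 1 ≤ j := by exact_mod_cast hmj
        linarith
      have hbound : ((j : ℝ) - m) * b m ≤ ∑ k ∈ Finset.Icc (m + 1) j, b k := by
        by_cases h2 : m + 1 ≤ j - 1
        · have hx := himax (m + 1) (by omega) h2
          simp only [Nat.add_sub_cancel] at hx
          rw [hcastm] at hx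
          have hx' := (lt_div_iff₀ (by linarith : (0:ℝ) < (j:ℝ) - m)).mp hx
          rw [mul_comm]
          exact hx'.le
        · have hmeq : m + 1 = j := by omega
          have : Finset.Icc (m + 1) j = {j} := by rw [hmeq]; simp
          rw [this, Finset.sum_singleton]
          have hjm : (j : ℝ) - m = 1 := by
            have : (m : ℝ) + 1 = j := by exact_mod_cast hmeq
            linarith
          rw [hjm, one_mul]
          have : b m = b (j - 1) := by congr 1; omega
          rw [this]; exact hjviol.le
      -- arithmetic step
      have goalcast : ((j : ℝ) - ((m + 1 : ℕ) : ℝ) + 1) = (j : ℝ) - m := by push_cast; ring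
      rw [goalcast]
      set T := ∑ k ∈ Finset.Icc (m + 1) j, b k with hT
      rw [hsplit] at ihm
      set c := (j : ℝ) - m with hc
      -- ihm : (c + 1) * a ≤ b m + T ; hbound : c * b m ≤ T ; hc1 : 1 ≤ c
      -- goal : c * a ≤ T
      nlinarith [mul_le_mul_of_nonneg_left ihm (by linarith : (0:ℝ) ≤ c),
        mul_le_mul_of_nonneg_left hbound (by norm_num : (0:ℝ) ≤ 1)]
  -- sums over untouched prefixes agree
  have hpre : ∀ k, k ≤ i → ∑ t ∈ Finset.range k, Fb t = ∑ t ∈ Finset.range k, b t := by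
    intro k hk
    apply Finset.sum_congr rfl
    intro t ht
    rw [hFb]
    rw [Finset.mem_range] at ht
    rw [if_neg (by omega)]
  -- middle block sums
  have hmid : ∀ k, i ≤ k → k ≤ j + 1 →
      ∑ t ∈ Finset.Ico i k, Fb t = ((k : ℝ) - i) * a := by
    intro k hik hkj
    have : ∀ t ∈ Finset.Ico i k, Fb t = a := by
      intro t ht
      rw [Finset.mem_Ico] at ht
      rw [hFb, if_pos ⟨ht.1, by omega⟩]
    rw [Finset.sum_congr rfl this, Finset.sum_const, Nat.card_Ico, nsmul_eq_mul]
    congr 1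
    push_cast [hik]
    ring
  -- decomposition of range k for i ≤ k
  have hdec : ∀ (f : ℕ → ℝ) k, i ≤ k →
      ∑ t ∈ Finset.range k, f t = ∑ t ∈ Finset.range i, f t + ∑ t ∈ Finset.Ico i k, f t := by
    intro f k hik
    rw [Finset.range_eq_Ico, Finset.range_eq_Ico, Finset.sum_Ico_consecutive _ (Nat.zero_le i) hik]
  -- sums beyond the block agree
  have hpost : ∀ k, j < k → ∑ t ∈ Finset.range k, Fb t = ∑ t ∈ Finset.range k, b t := by
    intro k hjk
    have hik : i ≤ k := by omega
    rw [hdec Fb k hik, hdec b k hik, hpre i le_rfl]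
    have h1 : ∑ t ∈ Finset.Ico i k, Fb t
        = ∑ t ∈ Finset.Ico i (j + 1), Fb t + ∑ t ∈ Finset.Ico (j + 1) k, Fb t :=
      (Finset.sum_Ico_consecutive _ (by omega) (by omega)).symm
    have h2 : ∑ t ∈ Finset.Ico i k, b t
        = ∑ t ∈ Finset.Ico i (j + 1), b t + ∑ t ∈ Finset.Ico (j + 1) k, b t :=
      (Finset.sum_Ico_consecutive _ (by omega) (by omega)).symm
    rw [h1, h2]
    have h3 : ∑ t ∈ Finset.Ico (j + 1) k, Fb t = ∑ t ∈ Finset.Ico (j + 1) k, b t := by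
      apply Finset.sum_congr rfl
      intro t ht
      rw [Finset.mem_Ico] at ht
      rw [hFb, if_neg (by omega)]
    have h4 : ∑ t ∈ Finset.Ico i (j + 1), Fb t = ∑ t ∈ Finset.Ico i (j + 1), b t := by
      rw [hmid (j + 1) (by omega) le_rfl]
      have hIcoIcc : ∑ t ∈ Finset.Ico i (j + 1), b t = ∑ t ∈ Finset.Icc i j, b t := by
        rw [Finset.Ico_add_one_right_eq_Icc]
      rw [hIcoIcc, hsumIcc]
      push_cast
      ring
    rw [h3, h4]
  constructor
  · intro k hkd
    by_cases hki : k ≤ i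
    · rw [hpre k hki]
    · by_cases hkj : k ≤ j
      · have hik : i ≤ k := by omega
        rw [hdec Fb k hik, hdec b k hik, hpre i le_rfl,
          hmid k hik (by omega)]
        have hsum2 : ∑ t ∈ Finset.Ico i k, b t + ∑ t ∈ Finset.Icc k j, b t
            = ∑ t ∈ Finset.Icc i j, b t := by
          rw [← Finset.Ico_add_one_right_eq_Icc, ← Finset.Ico_add_one_right_eq_Icc,
            Finset.sum_Ico_consecutive _ hik (by omega)]
        have hkey := key k hik hkj
        have hsum3 := hsumIcc
        -- ∑ Ico i k b = ∑ Icc i j b - ∑ Icc k j b ≤ ((j-i+1) - (j-k+1)) a = (k-i) a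
        linarith
      · rw [hpost k (by omega)]
  · rw [hpost d (by omega), hbsum]
end

section
/- Flatness process yields the least upper bound property: if b ∈ R^d is nonnegative with sum n, y ∈ R^d is nonincreasing and nonnegative with sum n, and ∑_{i=1}^k b_i ≤ ∑_{i=1}^k y_i for all 1 ≤ k ≤ d, then the fully flattened vector F(b) (iterating the flatness step until the result is nonincreasing) satisfies F(b) ≺ y. -/
open Finset Classical

/-- One step of the Cicalese–Vaccaro flatness process on a length-`d` vector
`b : ℕ → ℝ`: if there is a smallest index `j ∈ {1,…,d-1}` with `b j > b (j-1)`,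
choose the greatest `i ∈ {1,…,j-1}` with `b (i-1) ≥ (∑_{k=i}^j b k)/(j-i+1)`
(and `i = 0` if there is none), and replace entries `i,…,j` by their average;
otherwise do nothing. -/
noncomputable def flattenStep (d : ℕ) (b : ℕ → ℝ) : ℕ → ℝ :=
  if hj : ∃ j, 1 ≤ j ∧ j < d ∧ b (j - 1) < b j then
    let j := Nat.find hj
    let i := Nat.findGreatest
      (fun i => 1 ≤ i ∧
        (∑ k ∈ Finset.Icc i j, b k) / ((j - i + 1 : ℕ) : ℝ) ≤ b (i - 1))
      (j - 1)
    let a := (∑ k ∈ Finset.Icc i j, b k) / ((j - i + 1 : ℕ) : ℝ)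
    fun k => if i ≤ k ∧ k ≤ j then a else b k
  else b

/-- The fully flattened vector: iterating the flatness step `d` times (each
effective step merges at least two constant blocks, so after at most `d` steps
the vector is nonincreasing and the step acts as the identity). -/
noncomputable def flatten (d : ℕ) (b : ℕ → ℝ) : ℕ → ℝ :=
  (flattenStep d)^[d] b


lemma block_avg_dom (d : ℕ) (b y : ℕ → ℝ) (i j : ℕ) (hij : i ≤ j) (hjd : j < d)
    (hysort : ∀ k l, k ≤ l → l < d → y l ≤ y k)
    (hdom : ∀ k ≤ d, (∑ t ∈ Finset.range k, b t) ≤ ∑ t ∈ Finset.range k, y t) :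
    (∀ k ≤ d, (∑ t ∈ Finset.range k,
        (if i ≤ t ∧ t ≤ j then (∑ s ∈ Finset.Icc i j, b s) / ((j - i + 1 : ℕ) : ℝ) else b t))
        ≤ ∑ t ∈ Finset.range k, y t) ∧
    ((∑ t ∈ Finset.range d,
        (if i ≤ t ∧ t ≤ j then (∑ s ∈ Finset.Icc i j, b s) / ((j - i + 1 : ℕ) : ℝ) else b t))
      = ∑ t ∈ Finset.range d, b t) := by
  set A := ∑ s ∈ Finset.Icc i j, b s with hA
  set a := A / ((j - i + 1 : ℕ) : ℝ) with ha
  have hN0 : (0:ℝ) < ((j - i + 1 : ℕ) : ℝ) := by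
    exact_mod_cast Nat.succ_pos (j - i)
  have haN : a * ((j - i + 1 : ℕ) : ℝ) = A := div_mul_cancel₀ _ (ne_of_gt hN0)
  have hhigh : ∀ m, j < m →
      (∑ t ∈ Finset.range m, (if i ≤ t ∧ t ≤ j then a else b t)) = ∑ t ∈ Finset.range m, b t := by
    intro m hm
    have hsub : Finset.Icc i j ⊆ Finset.range m := by
      intro t ht
      simp only [Finset.mem_Icc] at ht
      simp only [Finset.mem_range]
      omega
    rw [← Finset.sum_sdiff hsub, ← Finset.sum_sdiff hsub]
    congr 1
    · apply Finset.sum_congr rfl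
      intro t ht
      simp only [Finset.mem_sdiff, Finset.mem_Icc] at ht
      exact if_neg ht.2
    · rw [Finset.sum_congr rfl (fun t ht => if_pos (Finset.mem_Icc.mp ht)),
        Finset.sum_const, Nat.card_Icc]
      have hc : j + 1 - i = j - i + 1 := by omega
      rw [hc, nsmul_eq_mul, mul_comm]
      exact haN
  have hlow : ∀ m, m ≤ i →
      (∑ t ∈ Finset.range m, (if i ≤ t ∧ t ≤ j then a else b t)) = ∑ t ∈ Finset.range m, b t := by
    intro m hm
    apply Finset.sum_congr rfl
    intro t ht
    simp only [Finset.mem_range] at ht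
    exact if_neg (by omega)
  have hmid : ∀ m, i < m → m ≤ j →
      (∑ t ∈ Finset.range m, (if i ≤ t ∧ t ≤ j then a else b t)) ≤ ∑ t ∈ Finset.range m, y t := by
    intro m him hmj
    have hs1 : (∑ t ∈ Finset.range m, (if i ≤ t ∧ t ≤ j then a else b t))
        = ∑ t ∈ Finset.range i, b t + ((m - i : ℕ) : ℝ) * a := by
      rw [← Finset.sum_range_add_sum_Ico _ (le_of_lt him)]
      congr 1
      · apply Finset.sum_congr rfl
        intro t ht
        simp only [Finset.mem_range] at ht
        exact if_neg (by omega)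
      · rw [Finset.sum_congr rfl
          (fun t ht => if_pos (by simp only [Finset.mem_Ico] at ht; omega)),
          Finset.sum_const, Nat.card_Ico, nsmul_eq_mul]
    rw [hs1]
    set p := m - i with hp
    set q := j + 1 - m with hq
    have hbj1 : ∑ t ∈ Finset.range (j+1), b t = ∑ t ∈ Finset.range i, b t + A := by
      rw [← Finset.sum_range_add_sum_Ico b (show i ≤ j+1 by omega)]
      rw [hA, ← Finset.Ico_add_one_right_eq_Icc]
    have hyj1 : ∑ t ∈ Finset.range (j+1), y t
        = ∑ t ∈ Finset.range m, y t + ∑ t ∈ Finset.Ico m (j+1), y t :=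
      (Finset.sum_range_add_sum_Ico y (by omega)).symm
    have hym : ∑ t ∈ Finset.range m, y t
        = ∑ t ∈ Finset.range i, y t + ∑ t ∈ Finset.Ico i m, y t :=
      (Finset.sum_range_add_sum_Ico y (by omega)).symm
    have hR : ∑ t ∈ Finset.Ico m (j+1), y t ≤ (q:ℝ) * y m := by
      have := Finset.sum_le_card_nsmul (Finset.Ico m (j+1)) y (y m)
        (fun t ht => by
          simp only [Finset.mem_Ico] at ht
          exact hysort m t ht.1 (by omega))
      rwa [Nat.card_Ico, nsmul_eq_mul] at this
    have hL : (p:ℝ) * y m ≤ ∑ t ∈ Finset.Ico i m, y t := by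
      have := Finset.card_nsmul_le_sum (Finset.Ico i m) y (y m)
        (fun t ht => by
          simp only [Finset.mem_Ico] at ht
          exact hysort t m (le_of_lt ht.2) (by omega))
      rwa [Nat.card_Ico, nsmul_eq_mul] at this
    have hBi : ∑ t ∈ Finset.range i, b t ≤ ∑ t ∈ Finset.range i, y t := hdom i (by omega)
    have hBj : ∑ t ∈ Finset.range (j+1), b t ≤ ∑ t ∈ Finset.range (j+1), y t :=
      hdom (j+1) (by omega)
    have hNpq : ((j - i + 1:ℕ):ℝ) = (p:ℝ) + (q:ℝ) := by
      have : (j - i + 1 : ℕ) = p + q := by omega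
      rw [this]; push_cast; ring
    have haN' : a * ((p:ℝ) + q) = A := by rw [← hNpq]; exact haN
    have g1 : -((q:ℝ) * y m) ≤ (∑ t ∈ Finset.range m, y t) - (∑ t ∈ Finset.range i, b t) - A := by
      linarith
    have g2 : (p:ℝ) * y m ≤ (∑ t ∈ Finset.range m, y t) - (∑ t ∈ Finset.range i, b t) := by
      linarith
    have key : 0 ≤ ((∑ t ∈ Finset.range m, y t) - (∑ t ∈ Finset.range i, b t) - (p:ℝ) * a)
        * ((p:ℝ) + q) := by
      have e : ((∑ t ∈ Finset.range m, y t) - (∑ t ∈ Finset.range i, b t) - (p:ℝ) * a)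
          * ((p:ℝ) + q)
          = (p:ℝ) * ((∑ t ∈ Finset.range m, y t) - (∑ t ∈ Finset.range i, b t) - A)
            + (q:ℝ) * ((∑ t ∈ Finset.range m, y t) - (∑ t ∈ Finset.range i, b t)) := by
        linear_combination (-(p:ℝ)) * haN'
      rw [e]
      nlinarith [mul_le_mul_of_nonneg_left g1 (by positivity : (0:ℝ) ≤ (p:ℝ)),
        mul_le_mul_of_nonneg_left g2 (by positivity : (0:ℝ) ≤ (q:ℝ))]
    have hpq0 : (0:ℝ) < (p:ℝ) + q := by rw [← hNpq]; exact hN0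
    nlinarith [key, hpq0]
  constructor
  · intro m hmd
    rcases le_or_gt m i with h1 | h1
    · rw [hlow m h1]; exact hdom m hmd
    · rcases le_or_gt m j with h2 | h2
      · exact hmid m h1 h2
      · rw [hhigh m h2]; exact hdom m hmd
  · exact hhigh d hjd

lemma step_dom (d : ℕ) (b y : ℕ → ℝ)
    (hysort : ∀ k l, k ≤ l → l < d → y l ≤ y k)
    (hdom : ∀ k ≤ d, (∑ t ∈ Finset.range k, b t) ≤ ∑ t ∈ Finset.range k, y t) :
    (∀ k ≤ d, (∑ t ∈ Finset.range k, flattenStep d b t) ≤ ∑ t ∈ Finset.range k, y t) ∧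
    (∑ t ∈ Finset.range d, flattenStep d b t) = ∑ t ∈ Finset.range d, b t := by
  by_cases hj : ∃ j, 1 ≤ j ∧ j < d ∧ b (j - 1) < b j
  · obtain ⟨hj1, hjd, _⟩ := Nat.find_spec hj
    set j := Nat.find hj with hjdef
    set i := Nat.findGreatest
      (fun i => 1 ≤ i ∧
        (∑ k ∈ Finset.Icc i j, b k) / ((j - i + 1 : ℕ) : ℝ) ≤ b (i - 1))
      (j - 1) with hidef
    have hile : i ≤ j - 1 := Nat.findGreatest_le _
    have hij : i ≤ j := by omega
    have hstep : flattenStep d b = fun k =>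
        if i ≤ k ∧ k ≤ j then (∑ s ∈ Finset.Icc i j, b s) / ((j - i + 1 : ℕ) : ℝ) else b k := by
      rw [flattenStep, dif_pos hj]
    rw [hstep]
    exact block_avg_dom d b y i j hij hjd hysort hdom
  · rw [flattenStep, dif_neg hj]
    exact ⟨hdom, rfl⟩

/-- least-upper-bound property of the flatness process.  If `b`
is nonnegative with sum `n`, `y` is nonincreasing and nonnegative with sum `n`,
and every partial sum of `b` is bounded by the corresponding partial sum of
`y`, then the fully flattened vector `F(b)` is majorized by `y`. -/
theorem flatten_maj_of_partialSums_le
    (d : ℕ) (n : ℝ) (b y : ℕ → ℝ)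
    (hb0 : ∀ k < d, 0 ≤ b k)
    (hbsum : (∑ t ∈ Finset.range d, b t) = n)
    (hysort : ∀ k l, k ≤ l → l < d → y l ≤ y k)
    (hy0 : ∀ k < d, 0 ≤ y k)
    (hysum : (∑ t ∈ Finset.range d, y t) = n)
    (hdom : ∀ k ≤ d, (∑ t ∈ Finset.range k, b t) ≤ ∑ t ∈ Finset.range k, y t) :
    (∀ k ≤ d, (∑ t ∈ Finset.range k, flatten d b t) ≤
        ∑ t ∈ Finset.range k, y t) ∧
      (∑ t ∈ Finset.range d, flatten d b t) = ∑ t ∈ Finset.range d, y t := by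
  have main : ∀ s : ℕ,
      (∀ k ≤ d, (∑ t ∈ Finset.range k, (flattenStep d)^[s] b t) ≤ ∑ t ∈ Finset.range k, y t) ∧
      (∑ t ∈ Finset.range d, (flattenStep d)^[s] b t) = ∑ t ∈ Finset.range d, b t := by
    intro s
    induction s with
    | zero => exact ⟨hdom, rfl⟩
    | succ s ih =>
      obtain ⟨ih1, ih2⟩ := ih
      obtain ⟨g1, g2⟩ := step_dom d _ y hysort ih1
      rw [Function.iterate_succ_apply']
      exact ⟨g1, g2.trans ih2⟩
  obtain ⟨h1, h2⟩ := main d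
  exact ⟨h1, by rw [flatten]; rw [h2, hbsum, hysum]⟩
end
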